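/- Let G = (V, E, d, w) be a locally finite weighted graph. For any edge uv ∈ E, the Ricci curvature satisfies the lower bound κ(u,v) ≥ 2w_{uv}/D_u + 2w_{uv}/D_v − Σ_{x∈Γ(u)} (w_{ux}/D_u)(d(x,u)/d(u,v)) − Σ_{y∈Γ(v)} (w_{vy}/D_v)(d(y,v)/d(u,v)). -/

import Mathlib

open Filter Finset
open scoped Classical

namespace RicciWeighted

variable {V : Type*}

/-- The length of a walk with respect to an edge-length function `d`:
the sum of the lengths of its edges. -/
noncomputable def walkLength (G : SimpleGraph V) (d : V → V → ℝ) {x y : V}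
    (p : G.Walk x y) : ℝ :=
  (p.darts.map fun e => d e.toProd.1 e.toProd.2).sum

/-- `d x y` is the shortest weighted path distance between `x` and `y`
(i.e. the greatest lower bound of the lengths of walks joining them). -/
def IsShortestDist (G : SimpleGraph V) (d : V → V → ℝ) : Prop :=
  ∀ x y : V, IsGLB {r : ℝ | ∃ p : G.Walk x y, walkLength G d p = r} (d x y)

/-- The total weight `D_x = ∑_{y ∼ x} w_{x y}` at a vertex `x`. -/
noncomputable def deg (G : SimpleGraph V) [∀ v : V, Fintype (G.neighborSet v)]
    (w : V → V → ℝ) (x : V) : ℝ :=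
  ∑ y ∈ G.neighborFinset x, w x y

/-- The random-walk probability distribution `μ_x^α`. -/
noncomputable def mu (G : SimpleGraph V) [∀ v : V, Fintype (G.neighborSet v)]
    (w : V → V → ℝ) (α : ℝ) (x : V) : V → ℝ :=
  fun z => if z = x then α else if G.Adj x z then (1 - α) * w x z / deg G w x else 0

/-- A coupling between two finitely supported distributions `μ₁` and `μ₂`. -/
structure IsCoupling (μ₁ μ₂ : V → ℝ) (A : V → V → ℝ) : Prop where
  mem_Icc : ∀ x y : V, A x y ∈ Set.Icc (0 : ℝ) 1
  finite_support : (Function.support fun p : V × V => A p.1 p.2).Finite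
  marginal_fst : ∀ x : V, ∑ᶠ y : V, A x y = μ₁ x
  marginal_snd : ∀ y : V, ∑ᶠ x : V, A x y = μ₂ y

/-- The transport cost `∑_{x,y} A(x,y) d(x,y)` of a plan `A`. -/
noncomputable def cost (d : V → V → ℝ) (A : V → V → ℝ) : ℝ :=
  ∑ᶠ p : V × V, A p.1 p.2 * d p.1 p.2

/-- The Wasserstein transportation distance between `μ₁` and `μ₂`. -/
noncomputable def W (d : V → V → ℝ) (μ₁ μ₂ : V → ℝ) : ℝ :=
  sInf {r : ℝ | ∃ A : V → V → ℝ, IsCoupling μ₁ μ₂ A ∧ cost d A = r}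

/-- The `α`-Ricci curvature `κ_α(x,y) = 1 - W(μ_x^α, μ_y^α)/d(x,y)`. -/
noncomputable def kappaAlpha (G : SimpleGraph V) [∀ v : V, Fintype (G.neighborSet v)]
    (d w : V → V → ℝ) (α : ℝ) (x y : V) : ℝ :=
  1 - W d (mu G w α x) (mu G w α y) / d x y

/-- `k` is the (Lin–Lu–Yau) Ricci curvature of the pair `(x, y)`:
the limit of `κ_α(x,y)/(1-α)` as `α → 1⁻`. -/
def IsRicci (G : SimpleGraph V) [∀ v : V, Fintype (G.neighborSet v)]
    (d w : V → V → ℝ) (x y : V) (k : ℝ) : Prop :=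
  Tendsto (fun α : ℝ => kappaAlpha G d w α x y / (1 - α))
    (nhdsWithin 1 (Set.Iio 1)) (nhds k)

/-- A `∗`-coupling between `μ_u` and `μ_v`. -/
structure IsStarCoupling (μu μv : V → ℝ) (u v : V) (B : V → V → ℝ) : Prop where
  pos : 0 < B u v
  nonpos : ∀ x y : V, (x, y) ≠ (u, v) → B x y ≤ 0
  finite_support : (Function.support fun p : V × V => B p.1 p.2).Finite
  sum_zero : ∑ᶠ p : V × V, B p.1 p.2 = 0
  marginal_fst : ∀ x : V, x ≠ u → ∑ᶠ y : V, B x y = -μu x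
  marginal_snd : ∀ y : V, y ≠ v → ∑ᶠ x : V, B x y = -μv y

/-- The `Treelike` property: for every edge `(x,y)` and every `k ∈ N(x)`, `l ∈ N(y)`,
`d(k,l) = d(k,x) + d(x,y) + d(y,l)`. -/
def Treelike (G : SimpleGraph V) (d : V → V → ℝ) : Prop :=
  ∀ x y : V, G.Adj x y →
    ∀ k : V, (k = x ∨ G.Adj x k) → ∀ l : V, (l = y ∨ G.Adj y l) →
      d k l = d k x + d x y + d y l

/-- `f` is Lip(1) with respect to `d`. -/
def Lip1 (d : V → V → ℝ) (f : V → ℝ) : Prop := ∀ x y : V, f x - f y ≤ d x y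

end RicciWeighted

/-!
For `α` close to `1`, couple `μ_u^α` with `μ_v^α` by leaving in place the mass `μ_v^α(u)` at `u`
and `μ_u^α(v)` at `v`, and sending the rest of `μ_u^α` to the rest of `μ_v^α` independently, along
`x → u → v → y`. By the triangle inequality this plan costs at most
`(1-α) (∑_x (w_{ux}/D_u) d(x,u) + ∑_y (w_{vy}/D_v) d(y,v)) + (1 - 2μ_u^α(v) - 2μ_v^α(u)) d(u,v)`,
and `μ_u^α(v) + μ_v^α(u) = (1-α)(w_{uv}/D_u + w_{uv}/D_v)`. Hence `κ_α(u,v)/(1-α)` is at least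
the claimed bound for all `α < 1` near `1`, and so is its limit `κ(u,v)`.
-/

namespace RicciWeighted

variable {V : Type*}

section ShortestDist

variable {G : SimpleGraph V} {d : V → V → ℝ}

lemma IsShortestDist.nonneg (hshort : IsShortestDist G d) (hd_pos : ∀ x y, G.Adj x y → 0 < d x y)
    (x y : V) : 0 ≤ d x y := by
  refine (hshort x y).2 ?_
  rintro _ ⟨p, rfl⟩
  refine List.sum_nonneg fun r hr => ?_
  obtain ⟨e, -, rfl⟩ := List.mem_map.1 hr
  exact (hd_pos _ _ e.adj).le

lemma IsShortestDist.self_eq_zero (hshort : IsShortestDist G d)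
    (hd_pos : ∀ x y, G.Adj x y → 0 < d x y) (x : V) : d x x = 0 :=
  le_antisymm ((hshort x x).1 ⟨.nil, by simp [walkLength]⟩) (hshort.nonneg hd_pos x x)

lemma IsShortestDist.triangle (hshort : IsShortestDist G d) (x y z : V) :
    d x z ≤ d x y + d y z := by
  refine le_of_forall_pos_le_add fun ε hε => ?_
  obtain ⟨_, ⟨p, rfl⟩, -, hp⟩ :=
    (hshort x y).exists_between (lt_add_of_pos_right (d x y) (half_pos hε))
  obtain ⟨_, ⟨q, rfl⟩, -, hq⟩ :=
    (hshort y z).exists_between (lt_add_of_pos_right (d y z) (half_pos hε))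
  have hpq : d x z ≤ walkLength G d p + walkLength G d q :=
    (hshort x z).1 ⟨p.append q, by simp [walkLength, SimpleGraph.Walk.darts_append]⟩
  linarith

end ShortestDist

lemma W_le_cost {d : V → V → ℝ} (hd : ∀ x y, 0 ≤ d x y) {μ₁ μ₂ : V → ℝ} {A : V → V → ℝ}
    (hA : IsCoupling μ₁ μ₂ A) : W d μ₁ μ₂ ≤ cost d A :=
  csInf_le ⟨0, by
    rintro _ ⟨B, hB, rfl⟩
    exact finsum_nonneg fun p => mul_nonneg (hB.mem_Icc p.1 p.2).1 (hd p.1 p.2)⟩ ⟨A, hA, rfl⟩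

lemma cost_eq_sum_sum (d : V → V → ℝ) {A : V → V → ℝ} (s : Finset V)
    (hA : ∀ x y, x ∉ s ∨ y ∉ s → A x y = 0) :
    cost d A = ∑ x ∈ s, ∑ y ∈ s, A x y * d x y := by
  rw [cost, finsum_eq_sum_of_support_subset _ (s := s ×ˢ s), Finset.sum_product]
  intro p hp
  by_contra hps
  rw [Finset.coe_product, Set.mem_prod, not_and_or] at hps
  exact hp (by simp [hA p.1 p.2 hps])

structure IsCommonPart (s : Finset V) (μ₁ μ₂ ν : V → ℝ) : Prop where
  support_fst : ∀ x ∉ s, μ₁ x = 0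
  support_snd : ∀ x ∉ s, μ₂ x = 0
  sum_fst : ∑ x ∈ s, μ₁ x = 1
  sum_snd : ∑ x ∈ s, μ₂ x = 1
  nonneg : ∀ x, 0 ≤ ν x
  le_fst : ∀ x, ν x ≤ μ₁ x
  le_snd : ∀ x, ν x ≤ μ₂ x
  sum_lt_one : ∑ x ∈ s, ν x < 1

/-- The mass `ν` stays in place; the rest of `μ₁` is spread over the rest of `μ₂`
proportionally. -/
noncomputable def residualPlan (s : Finset V) (μ₁ μ₂ ν : V → ℝ) (x y : V) : ℝ :=
  (μ₁ x - ν x) * (μ₂ y - ν y) / (1 - ∑ z ∈ s, ν z) + if x = y then ν x else 0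

namespace IsCommonPart

variable {s : Finset V} {μ₁ μ₂ ν : V → ℝ}

lemma eq_zero_of_notMem (h : IsCommonPart s μ₁ μ₂ ν) {x : V} (hx : x ∉ s) : ν x = 0 :=
  le_antisymm (h.support_fst x hx ▸ h.le_fst x) (h.nonneg x)

lemma one_sub_sum_pos (h : IsCommonPart s μ₁ μ₂ ν) : 0 < 1 - ∑ x ∈ s, ν x :=
  sub_pos.2 h.sum_lt_one

lemma fst_le_one (h : IsCommonPart s μ₁ μ₂ ν) (x : V) : μ₁ x ≤ 1 := by
  have hμ₁ : ∀ x, 0 ≤ μ₁ x := fun x => (h.nonneg x).trans (h.le_fst x)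
  by_cases hx : x ∈ s
  · exact h.sum_fst ▸ Finset.single_le_sum (fun x _ => hμ₁ x) hx
  · exact h.support_fst x hx ▸ zero_le_one

lemma sum_sub_fst (h : IsCommonPart s μ₁ μ₂ ν) : ∑ x ∈ s, (μ₁ x - ν x) = 1 - ∑ x ∈ s, ν x := by
  rw [Finset.sum_sub_distrib, h.sum_fst]

lemma sum_sub_snd (h : IsCommonPart s μ₁ μ₂ ν) : ∑ x ∈ s, (μ₂ x - ν x) = 1 - ∑ x ∈ s, ν x := by
  rw [Finset.sum_sub_distrib, h.sum_snd]

lemma residualPlan_nonneg (h : IsCommonPart s μ₁ μ₂ ν) (x y : V) :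
    0 ≤ residualPlan s μ₁ μ₂ ν x y := by
  have := sub_nonneg.2 (h.le_fst x)
  have := sub_nonneg.2 (h.le_snd y)
  have := h.one_sub_sum_pos
  have : (0 : ℝ) ≤ if x = y then ν x else 0 := by split_ifs <;> simp [h.nonneg x]
  unfold residualPlan
  positivity

lemma residualPlan_eq_zero (h : IsCommonPart s μ₁ μ₂ ν) {x y : V} (hxy : x ∉ s ∨ y ∉ s) :
    residualPlan s μ₁ μ₂ ν x y = 0 := by
  rcases hxy with hx | hy
  · simp [residualPlan, h.support_fst x hx, h.eq_zero_of_notMem hx]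
  · have : ν y = 0 := h.eq_zero_of_notMem hy
    by_cases hxy : x = y
    · subst hxy; simp [residualPlan, h.support_snd x hy, this]
    · simp [residualPlan, h.support_snd y hy, this, hxy]

lemma sum_residualPlan_left (h : IsCommonPart s μ₁ μ₂ ν) (x : V) :
    ∑ y ∈ s, residualPlan s μ₁ μ₂ ν x y = μ₁ x := by
  have hc := h.one_sub_sum_pos.ne'
  have hν : (if x ∈ s then ν x else 0) = ν x :=
    ite_eq_left_iff.2 fun hx => (h.eq_zero_of_notMem hx).symm
  simp only [residualPlan, Finset.sum_add_distrib, ← Finset.sum_div, ← Finset.mul_sum,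
    h.sum_sub_snd, Finset.sum_ite_eq, hν, mul_div_cancel_right₀ _ hc, sub_add_cancel]

lemma sum_residualPlan_right (h : IsCommonPart s μ₁ μ₂ ν) (y : V) :
    ∑ x ∈ s, residualPlan s μ₁ μ₂ ν x y = μ₂ y := by
  have hc := h.one_sub_sum_pos.ne'
  have hν : (if y ∈ s then ν y else 0) = ν y :=
    ite_eq_left_iff.2 fun hy => (h.eq_zero_of_notMem hy).symm
  have hdiag : ∀ x, (if x = y then ν x else 0) = if x = y then ν y else 0 := by
    intro x; split_ifs with hxy <;> simp [hxy]
  simp only [residualPlan, Finset.sum_add_distrib, ← Finset.sum_div, ← Finset.sum_mul,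
    h.sum_sub_fst, hdiag, Finset.sum_ite_eq', hν, mul_div_cancel_left₀ _ hc, sub_add_cancel]

lemma isCoupling_residualPlan (h : IsCommonPart s μ₁ μ₂ ν) :
    IsCoupling μ₁ μ₂ (residualPlan s μ₁ μ₂ ν) := by
  have hzero := fun x y => h.residualPlan_eq_zero (x := x) (y := y)
  refine ⟨fun x y => ⟨h.residualPlan_nonneg x y, ?_⟩, ?_, fun x => ?_, fun y => ?_⟩
  · by_cases hy : y ∈ s
    · calc residualPlan s μ₁ μ₂ ν x y ≤ ∑ y ∈ s, residualPlan s μ₁ μ₂ ν x y :=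
            Finset.single_le_sum (fun y _ => h.residualPlan_nonneg x y) hy
        _ = μ₁ x := h.sum_residualPlan_left x
        _ ≤ 1 := h.fst_le_one x
    · exact hzero x y (Or.inr hy) ▸ zero_le_one
  · refine (s ×ˢ s).finite_toSet.subset fun p hp => ?_
    by_contra hps
    rw [Finset.coe_product, Set.mem_prod, not_and_or] at hps
    exact hp (hzero p.1 p.2 hps)
  · rw [finsum_eq_sum_of_support_subset _ (s := s) fun y hy => ?_, h.sum_residualPlan_left]
    by_contra hys
    exact hy (hzero x y (Or.inr hys))
  · rw [finsum_eq_sum_of_support_subset _ (s := s) fun x hx => ?_, h.sum_residualPlan_right]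
    by_contra hxs
    exact hx (hzero x y (Or.inl hxs))

lemma cost_residualPlan_le (h : IsCommonPart s μ₁ μ₂ ν) {d : V → V → ℝ}
    (hd_self : ∀ x, d x x = 0) (hd_tri : ∀ x y z, d x z ≤ d x y + d y z) (u v : V) :
    cost d (residualPlan s μ₁ μ₂ ν) ≤ ∑ x ∈ s, (μ₁ x - ν x) * d x u +
      (1 - ∑ x ∈ s, ν x) * d u v + ∑ y ∈ s, (μ₂ y - ν y) * d v y := by
  set c := 1 - ∑ x ∈ s, ν x with hc_def
  have hc : c ≠ 0 := h.one_sub_sum_pos.ne'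
  have hweight : ∀ x y, 0 ≤ (μ₁ x - ν x) * (μ₂ y - ν y) / c := fun x y => by
    have := sub_nonneg.2 (h.le_fst x)
    have := sub_nonneg.2 (h.le_snd y)
    have := h.one_sub_sum_pos
    positivity
  rw [cost_eq_sum_sum d s fun x y => h.residualPlan_eq_zero]
  calc ∑ x ∈ s, ∑ y ∈ s, residualPlan s μ₁ μ₂ ν x y * d x y
      ≤ ∑ x ∈ s, ∑ y ∈ s, (μ₁ x - ν x) * (μ₂ y - ν y) / c * (d x u + d u v + d v y) := by
        refine Finset.sum_le_sum fun x _ => Finset.sum_le_sum fun y _ => ?_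
        have hdiag : (if x = y then ν x else 0) * d x y = 0 := by
          split_ifs with hxy
          · rw [hxy, hd_self, mul_zero]
          · rw [zero_mul]
        rw [residualPlan, add_mul, hdiag, add_zero]
        exact mul_le_mul_of_nonneg_left
          ((hd_tri x u y).trans (by linarith [hd_tri u v y])) (hweight x y)
    _ = _ := by
        have hsplit : ∀ x y, (μ₁ x - ν x) * (μ₂ y - ν y) / c * (d x u + d u v + d v y) =
            (μ₁ x - ν x) * d x u * ((μ₂ y - ν y) / c) +
              d u v / c * ((μ₁ x - ν x) * (μ₂ y - ν y)) +
              (μ₁ x - ν x) / c * ((μ₂ y - ν y) * d v y) := fun x y => by ring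
        simp only [hsplit, Finset.sum_add_distrib, ← Finset.mul_sum, ← Finset.sum_mul,
          ← Finset.sum_div, h.sum_sub_fst, h.sum_sub_snd, ← hc_def]
        field_simp

end IsCommonPart

section RandomWalk

variable {G : SimpleGraph V} [∀ v : V, Fintype (G.neighborSet v)] {w : V → V → ℝ} {α : ℝ}

lemma deg_pos (hw_pos : ∀ x y, G.Adj x y → 0 < w x y) {x y : V} (hxy : G.Adj x y) :
    0 < deg G w x :=
  Finset.sum_pos (fun z hz => hw_pos x z ((G.mem_neighborFinset x z).1 hz))
    ⟨y, (G.mem_neighborFinset x y).2 hxy⟩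

lemma mu_self (x : V) : mu G w α x x = α := if_pos rfl

lemma mu_of_adj {x z : V} (hxz : G.Adj x z) : mu G w α x z = (1 - α) * w x z / deg G w x := by
  simp [mu, hxz.ne', hxz]

lemma mu_eq_zero {x z : V} (hz : z ∉ insert x (G.neighborFinset x)) : mu G w α x z = 0 := by
  simp only [Finset.mem_insert, SimpleGraph.mem_neighborFinset, not_or] at hz
  simp [mu, hz.1, hz.2]

lemma mu_nonneg_of_ne (hw : ∀ x y, G.Adj x y → 0 ≤ w x y) (hα : α ≤ 1) {x z : V}
    (hzx : z ≠ x) : 0 ≤ mu G w α x z := by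
  have hD : 0 ≤ deg G w x :=
    Finset.sum_nonneg fun y hy => hw x y ((G.mem_neighborFinset x y).1 hy)
  unfold mu
  rw [if_neg hzx]
  split_ifs with hxz
  · exact div_nonneg (mul_nonneg (sub_nonneg.2 hα) (hw x z hxz)) hD
  · exact le_rfl

lemma mu_nonneg (hw : ∀ x y, G.Adj x y → 0 ≤ w x y) (hα₀ : 0 ≤ α) (hα₁ : α ≤ 1) (x z : V) :
    0 ≤ mu G w α x z := by
  rcases eq_or_ne z x with rfl | hzx
  · rw [mu_self]
    exact hα₀
  · exact mu_nonneg_of_ne hw hα₁ hzx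

lemma sum_mu_mul {s : Finset V} {x : V} (hs : insert x (G.neighborFinset x) ⊆ s) (f : V → ℝ) :
    ∑ z ∈ s, mu G w α x z * f z =
      α * f x + (1 - α) * ∑ z ∈ G.neighborFinset x, w x z / deg G w x * f z := by
  rw [← Finset.sum_subset hs fun z _ hz => by rw [mu_eq_zero hz, zero_mul],
    Finset.sum_insert (by simp), mu_self, Finset.mul_sum]
  congr 1
  refine Finset.sum_congr rfl fun z hz => ?_
  rw [mu_of_adj ((G.mem_neighborFinset x z).1 hz)]
  ring

lemma sum_mu {s : Finset V} {x : V} (hs : insert x (G.neighborFinset x) ⊆ s)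
    (hD : deg G w x ≠ 0) : ∑ z ∈ s, mu G w α x z = 1 := by
  have h := sum_mu_mul (w := w) (α := α) hs fun _ => 1
  simp only [mul_one, ← Finset.sum_div] at h
  rw [h, ← deg, div_self hD]
  ring

variable (G w α) in
noncomputable def edgeCommonPart (u v : V) (z : V) : ℝ :=
  (if z = u then mu G w α v u else 0) + (if z = v then mu G w α u v else 0)

lemma sum_edgeCommonPart_mul {s : Finset V} {u v : V} (hu : u ∈ s) (hv : v ∈ s) (f : V → ℝ) :
    ∑ z ∈ s, edgeCommonPart G w α u v z * f z = mu G w α v u * f u + mu G w α u v * f v := by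
  simp [edgeCommonPart, add_mul, Finset.sum_add_distrib, hu, hv]

lemma sum_edgeCommonPart {s : Finset V} {u v : V} (hu : u ∈ s) (hv : v ∈ s) :
    ∑ z ∈ s, edgeCommonPart G w α u v z = mu G w α v u + mu G w α u v := by
  simpa using sum_edgeCommonPart_mul (w := w) (α := α) hu hv fun _ => 1

lemma isCommonPart_edgeCommonPart (hw : ∀ x y, G.Adj x y → 0 ≤ w x y) {u v : V}
    (huv : G.Adj u v) (hDu : deg G w u ≠ 0) (hDv : deg G w v ≠ 0) (hα : α < 1)
    (hsum : mu G w α v u + mu G w α u v ≤ α) :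
    IsCommonPart (insert u (G.neighborFinset u) ∪ insert v (G.neighborFinset v))
      (mu G w α u) (mu G w α v) (edgeCommonPart G w α u v) := by
  have hvu_nonneg : 0 ≤ mu G w α v u := mu_nonneg_of_ne hw hα.le huv.ne
  have huv_nonneg : 0 ≤ mu G w α u v := mu_nonneg_of_ne hw hα.le huv.ne'
  have hμ := mu_nonneg (G := G) hw (by linarith) hα.le
  have hu : u ∈ insert u (G.neighborFinset u) ∪ insert v (G.neighborFinset v) := by simp
  have hv : v ∈ insert u (G.neighborFinset u) ∪ insert v (G.neighborFinset v) := by simp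
  refine ⟨fun x hx => mu_eq_zero fun h => hx (Finset.mem_union_left _ h),
    fun x hx => mu_eq_zero fun h => hx (Finset.mem_union_right _ h),
    sum_mu Finset.subset_union_left hDu, sum_mu Finset.subset_union_right hDv,
    fun x => ?_, fun x => ?_, fun x => ?_, ?_⟩
  · unfold edgeCommonPart
    split_ifs <;> linarith
  · unfold edgeCommonPart
    split_ifs with hxu hxv hxv
    · exact absurd (hxu.symm.trans hxv) huv.ne
    · subst hxu; rw [mu_self]; linarith
    · subst hxv; linarith
    · simpa using hμ u x
  · unfold edgeCommonPart
    split_ifs with hxu hxv hxv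
    · exact absurd (hxu.symm.trans hxv) huv.ne
    · subst hxu; linarith
    · subst hxv; rw [mu_self]; linarith
    · simpa using hμ v x
  · rw [sum_edgeCommonPart hu hv]
    linarith

lemma W_mu_le {d : V → V → ℝ} (hshort : IsShortestDist G d)
    (hd_pos : ∀ x y, G.Adj x y → 0 < d x y) (hd_symm : ∀ x y, d x y = d y x)
    (hw : ∀ x y, G.Adj x y → 0 ≤ w x y) {u v : V} (huv : G.Adj u v) (hDu : deg G w u ≠ 0)
    (hDv : deg G w v ≠ 0) (hα : α < 1) (hsum : mu G w α v u + mu G w α u v ≤ α) :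
    W d (mu G w α u) (mu G w α v) ≤
      (1 - α) * (∑ x ∈ G.neighborFinset u, w u x / deg G w u * d x u +
        ∑ y ∈ G.neighborFinset v, w v y / deg G w v * d y v) +
      (1 - 2 * (mu G w α v u + mu G w α u v)) * d u v := by
  have h := isCommonPart_edgeCommonPart hw huv hDu hDv hα hsum
  have hu : u ∈ insert u (G.neighborFinset u) ∪ insert v (G.neighborFinset v) := by simp
  have hv : v ∈ insert u (G.neighborFinset u) ∪ insert v (G.neighborFinset v) := by simp
  have hd_self := hshort.self_eq_zero hd_pos
  have hsymm : ∑ y ∈ G.neighborFinset v, w v y / deg G w v * d v y =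
      ∑ y ∈ G.neighborFinset v, w v y / deg G w v * d y v :=
    Finset.sum_congr rfl fun y _ => by rw [hd_symm]
  refine (W_le_cost (hshort.nonneg hd_pos) h.isCoupling_residualPlan).trans ?_
  refine (h.cost_residualPlan_le hd_self hshort.triangle u v).trans_eq ?_
  simp only [sub_mul, Finset.sum_sub_distrib, sum_mu_mul Finset.subset_union_left,
    sum_mu_mul Finset.subset_union_right, sum_edgeCommonPart_mul hu hv, sum_edgeCommonPart hu hv,
    hd_self, hsymm, hd_symm v u]
  ring

lemma le_kappaAlpha_div {d : V → V → ℝ} (hshort : IsShortestDist G d)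
    (hd_pos : ∀ x y, G.Adj x y → 0 < d x y) (hd_symm : ∀ x y, d x y = d y x)
    (hw_symm : ∀ x y, w x y = w y x) (hw_pos : ∀ x y, G.Adj x y → 0 < w x y) {u v : V}
    (huv : G.Adj u v) (hα : α < 1) (hsum : mu G w α v u + mu G w α u v ≤ α) :
    2 * w u v / deg G w u + 2 * w u v / deg G w v -
        (∑ x ∈ G.neighborFinset u, (w u x / deg G w u) * (d x u / d u v)) -
        (∑ y ∈ G.neighborFinset v, (w v y / deg G w v) * (d y v / d u v)) ≤
      kappaAlpha G d w α u v / (1 - α) := by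
  have hDu := deg_pos hw_pos huv
  have hDv := deg_pos hw_pos huv.symm
  have hduv := hd_pos u v huv
  have hW := W_mu_le hshort hd_pos hd_symm (fun x y hxy => (hw_pos x y hxy).le) huv hDu.ne'
    hDv.ne' hα hsum
  rw [mu_of_adj huv, mu_of_adj huv.symm, hw_symm v u] at hW
  simp only [← mul_div_assoc, ← Finset.sum_div]
  rw [le_div_iff₀ (sub_pos.2 hα), kappaAlpha]
  calc _ = 1 - ((1 - α) * (∑ x ∈ G.neighborFinset u, w u x / deg G w u * d x u +
          ∑ y ∈ G.neighborFinset v, w v y / deg G w v * d y v) +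
          (1 - 2 * ((1 - α) * w u v / deg G w v + (1 - α) * w u v / deg G w u)) * d u v) /
          d u v := by
        field_simp
        ring
    _ ≤ _ := by gcongr

end RandomWalk

end RicciWeighted

open RicciWeighted in
/-- For a locally finite weighted graph `G = (V,E,d,w)` and an edge
`uv ∈ E`, the Ricci curvature satisfies the lower bound
`κ(u,v) ≥ 2w_{uv}/D_u + 2w_{uv}/D_v − ∑_{x∈Γ(u)} (w_{ux}/D_u)(d(x,u)/d(u,v))
  − ∑_{y∈Γ(v)} (w_{vy}/D_v)(d(y,v)/d(u,v))`. -/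
theorem curvature_lower_bound
    {V : Type*} (G : SimpleGraph V) [∀ v : V, Fintype (G.neighborSet v)]
    (hconn : G.Connected)
    (d w : V → V → ℝ)
    (hd_symm : ∀ x y : V, d x y = d y x)
    (hd_pos : ∀ x y : V, G.Adj x y → 0 < d x y)
    (hshort : IsShortestDist G d)
    (hw_symm : ∀ x y : V, w x y = w y x)
    (hw_pos : ∀ x y : V, G.Adj x y → 0 < w x y)
    (u v : V) (huv : G.Adj u v)
    (k : ℝ) (hk : IsRicci G d w u v k) :
    2 * w u v / deg G w u + 2 * w u v / deg G w v -
        (∑ x ∈ G.neighborFinset u, (w u x / deg G w u) * (d x u / d u v)) -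
        (∑ y ∈ G.neighborFinset v, (w v y / deg G w v) * (d y v / d u v)) ≤ k := by
  have hsum_lim : Tendsto (fun α : ℝ => mu G w α v u + mu G w α u v)
      (nhdsWithin 1 (Set.Iio 1)) (nhds 0) := by
    simp only [mu_of_adj huv, mu_of_adj huv.symm]
    have hcont : Continuous fun α : ℝ =>
        (1 - α) * w v u / deg G w v + (1 - α) * w u v / deg G w u := by
      fun_prop
    simpa using (hcont.tendsto 1).mono_left nhdsWithin_le_nhds
  refine ge_of_tendsto hk ?_
  filter_upwards [hsum_lim.eventually_lt (tendsto_id.mono_left nhdsWithin_le_nhds) one_pos,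
    self_mem_nhdsWithin] with α hsum hα
  exact le_kappaAlpha_div hshort hd_pos hd_symm hw_symm hw_pos huv hα hsum.le
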